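/- arXiv:1504.03674 — 2 statements merged into one kernel-verified Lean document; each statement's English description precedes it below -/
import Mathlib

section
/- Let 0 → A →f B →g C → 0 be a short exact sequence of abelian groups (that is, f is injective, g is surjective, and the image of f equals the kernel of g). Then B is almost finitely generated if and only if both A and C are almost finitely generated. In particular, subgroups, quotient groups, and extensions of almost finitely generated abelian groups are almost finitely generated, i.e. the almost finitely generated abelian groups form a Serre class. -/
def AlmostTrivial (M : Type*) [AddCommGroup M] : Prop :=
  ∃ r : ℤ, r ≠ 0 ∧ ∀ m : M, r • m = 0

def AlmostFinitelyGenerated (M : Type*) [AddCommGroup M] : Prop :=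
  AlmostTrivial (AddCommGroup.torsion M) ∧ AddGroup.FG (M ⧸ AddCommGroup.torsion M)

/-!
An abelian group `M` is almost finitely generated iff `r • M` lies in a finitely generated
subgroup `N` for some `r ≠ 0`. Lifting generators of `M ⧸ tors M` gives one direction. For the
other, `N ∩ tors M` is a finitely generated torsion group, hence finite, and its exponent times
`r` kills `tors M`; and multiplication by `r` embeds the torsion-free group `M ⧸ tors M` into the
image of `N`. This description passes to subgroups (`ℤ` is noetherian), to quotients, and to
extensions: `rA * rC` maps `B` into the image of `N_A` plus a lift of generators of `N_C`.
-/

section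

open Function Submodule

theorem Submodule.FG.exists_fg_map_eq {R M N : Type*} [Semiring R] [AddCommMonoid M]
    [AddCommMonoid N] [Module R M] [Module R N] {f : M →ₗ[R] N} (hf : Surjective f)
    {P : Submodule R N} (hP : P.FG) : ∃ L : Submodule R M, L.FG ∧ L.map f = P := by
  classical
  obtain ⟨s, rfl⟩ := hP
  refine ⟨span R (s.image (surjInv hf)), ⟨_, rfl⟩, ?_⟩
  rw [map_span, Finset.coe_image, Set.image_image]
  simp only [surjInv_eq hf, Set.image_id']

variable {M : Type*} [AddCommGroup M]

theorem AlmostTrivial.of_finite [Finite M] : AlmostTrivial M :=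
  ⟨AddMonoid.exponent M, Int.natCast_ne_zero.mpr AddMonoid.exponent_ne_zero_of_finite,
    fun m => by rw [natCast_zsmul, AddMonoid.exponent_nsmul_eq_zero]⟩

theorem almostTrivial_torsion_of_zsmul_mem {r : ℤ} (hr : r ≠ 0) {N : Submodule ℤ M} (hN : N.FG)
    (hrN : ∀ m : M, r • m ∈ N) : AlmostTrivial (AddCommGroup.torsion M) := by
  set T := AddCommGroup.torsion M
  set K := N ⊓ T.toIntSubmodule
  have : AddGroup.FG K :=
    Module.Finite.iff_addGroup_fg.mp (Module.Finite.iff_fg.mpr (hN.of_le inf_le_left))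
  have : Finite K := AddCommGroup.finite_of_fg_isAddTorsion K fun x =>
    (AddSubmonoid.isOfFinAddOrder_coe (H := K.toAddSubmonoid)).mp x.2.2
  obtain ⟨s, hs, hsK⟩ := AlmostTrivial.of_finite (M := K)
  refine ⟨s * r, mul_ne_zero hs hr, fun t => Subtype.ext ?_⟩
  have hrt : r • (t : M) ∈ K := ⟨hrN t, t.2.zsmul⟩
  simpa [mul_zsmul] using congrArg Subtype.val (hsK ⟨_, hrt⟩)

theorem Module.Finite.of_zsmul_mem [IsAddTorsionFree M] {r : ℤ} (hr : r ≠ 0)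
    {N : Submodule ℤ M} (hN : N.FG) (hrN : ∀ m : M, r • m ∈ N) : Module.Finite ℤ M :=
  have : Module.Finite ℤ N := Module.Finite.iff_fg.mpr hN
  have := isNoetherian_of_isNoetherianRing_of_finite ℤ N
  Module.Finite.of_injective (LinearMap.codRestrict N (r • LinearMap.id) hrN) fun _ _ h =>
    zsmul_right_injective hr (by simpa using congrArg Subtype.val h)

theorem almostFinitelyGenerated_iff :
    AlmostFinitelyGenerated M ↔
      ∃ r : ℤ, r ≠ 0 ∧ ∃ N : Submodule ℤ M, N.FG ∧ ∀ m : M, r • m ∈ N := by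
  set T := AddCommGroup.torsion M
  set π := (QuotientAddGroup.mk' T).toIntLinearMap
  have hπ : Surjective π := QuotientAddGroup.mk'_surjective T
  constructor
  · rintro ⟨⟨r, hr, hrT⟩, hfg⟩
    obtain ⟨N, hN, hNπ⟩ := (Module.Finite.iff_addGroup_fg.mpr hfg).fg_top.exists_fg_map_eq hπ
    refine ⟨r, hr, N, hN, fun m => ?_⟩
    obtain ⟨n, hn, hnm⟩ : π m ∈ N.map π := hNπ ▸ mem_top
    have hmn : m - n ∈ T := QuotientAddGroup.eq_iff_sub_mem.mp hnm.symm
    have hrmn : r • (m - n) = 0 := congrArg Subtype.val (hrT ⟨_, hmn⟩)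
    rw [smul_sub, sub_eq_zero] at hrmn
    exact hrmn ▸ N.smul_mem r hn
  · rintro ⟨r, hr, N, hN, hrN⟩
    refine ⟨almostTrivial_torsion_of_zsmul_mem hr hN hrN, Module.Finite.iff_addGroup_fg.mp ?_⟩
    refine Module.Finite.of_zsmul_mem hr (hN.map π) fun q => ?_
    obtain ⟨m, rfl⟩ := hπ q
    exact ⟨r • m, hrN m, map_zsmul π r m⟩

variable {A B C : Type*} [AddCommGroup A] [AddCommGroup B] [AddCommGroup C]

theorem AlmostFinitelyGenerated.of_injective (f : A →+ B) (hf : Injective f)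
    (hB : AlmostFinitelyGenerated B) : AlmostFinitelyGenerated A := by
  obtain ⟨r, hr, N, hN, hrN⟩ := almostFinitelyGenerated_iff.mp hB
  refine almostFinitelyGenerated_iff.mpr ⟨r, hr, N.comap f.toIntLinearMap,
    fg_of_fg_map_injective _ hf (hN.of_le (map_comap_le _ _)), fun a => ?_⟩
  simpa using hrN (f a)

theorem AlmostFinitelyGenerated.of_surjective (g : B →+ C) (hg : Surjective g)
    (hB : AlmostFinitelyGenerated B) : AlmostFinitelyGenerated C := by
  obtain ⟨r, hr, N, hN, hrN⟩ := almostFinitelyGenerated_iff.mp hB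
  refine almostFinitelyGenerated_iff.mpr ⟨r, hr, N.map g.toIntLinearMap, hN.map _, fun c => ?_⟩
  obtain ⟨b, rfl⟩ := hg c
  exact ⟨r • b, hrN b, map_zsmul g r b⟩

theorem AlmostFinitelyGenerated.of_ker_le_range (f : A →+ B) (g : B →+ C) (hg : Surjective g)
    (hfg : g.ker ≤ f.range) (hA : AlmostFinitelyGenerated A) (hC : AlmostFinitelyGenerated C) :
    AlmostFinitelyGenerated B := by
  obtain ⟨rA, hrA, NA, hNA, hrNA⟩ := almostFinitelyGenerated_iff.mp hA
  obtain ⟨rC, hrC, NC, hNC, hrNC⟩ := almostFinitelyGenerated_iff.mp hC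
  obtain ⟨L, hL, hLg⟩ := hNC.exists_fg_map_eq (f := g.toIntLinearMap) hg
  refine almostFinitelyGenerated_iff.mpr ⟨rA * rC, mul_ne_zero hrA hrC,
    NA.map f.toIntLinearMap ⊔ L, (hNA.map _).sup hL, fun b => ?_⟩
  obtain ⟨l, hl, hlb⟩ : g (rC • b) ∈ L.map g.toIntLinearMap := hLg ▸ by simpa using hrNC (g b)
  obtain ⟨a, ha⟩ : rC • b - l ∈ f.range := hfg <| by
    rw [AddMonoidHom.mem_ker, map_sub]
    exact sub_eq_zero.mpr hlb.symm
  have hb : (rA * rC) • b = f (rA • a) + rA • l := by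
    rw [mul_zsmul, map_zsmul, ha, ← smul_add, sub_add_cancel]
  rw [hb]
  exact add_mem (mem_sup_left ⟨rA • a, hrNA a, rfl⟩) (mem_sup_right (L.smul_mem rA hl))
end

/-- For a short exact sequence `0 → A → B → C → 0` of abelian
groups, `B` is almost finitely generated if and only if both `A` and `C` are; i.e.
the almost finitely generated abelian groups form a Serre class. -/
theorem stmt4 {A B C : Type*} [AddCommGroup A] [AddCommGroup B] [AddCommGroup C]
    (f : A →+ B) (g : B →+ C) (hf : Function.Injective f) (hg : Function.Surjective g)
    (hfg : f.range = g.ker) :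
    AlmostFinitelyGenerated B ↔ AlmostFinitelyGenerated A ∧ AlmostFinitelyGenerated C :=
  ⟨fun hB => ⟨hB.of_injective f hf, hB.of_surjective g hg⟩,
    fun ⟨hA, hC⟩ => .of_ker_le_range f g hg hfg.ge hA hC⟩
end

section
/- Let G be a group and let H and K be subgroups of G. For each double coset j ∈ K\G/H choose a representative g_j ∈ G with j = K g_j H, and set L_j = H ∩ g_j⁻¹ K g_j. Then the map which sends the class xL_j ∈ G/L_j in the component indexed by j to the pair (xH, x g_j⁻¹ K) ∈ G/H × G/K is a well-defined bijection from the disjoint union ⨿_{j ∈ K\G/H} G/L_j to G/H × G/K, and it is G-equivariant, where G acts on each coset space G/L_j, G/H, G/K by left translation and on the product G/H × G/K diagonally. -/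
/-!
The diagonal action of `G` on `G/H × G/K` has the double coset `K b⁻¹ a H` as a complete
orbit invariant of `(aH, bK)`, and the stabilizer of `(H, g⁻¹K)` is `H ∩ g⁻¹Kg`. The map of
the theorem is therefore the orbit–stabilizer bijection `G/Stab(x_j) ≃ G • x_j`, summed over
the orbit representatives `x_j = (H, g_j⁻¹K)`.
-/

open MulAction Function

namespace MulAction

theorem bijective_sigma_ofQuotientStabilizer {G X ι : Type*} [Group G] [MulAction G X]
    (x : ι → X) (hinj : ∀ i j, x i ∈ orbit G (x j) → i = j)
    (hsurj : ∀ y, ∃ j, y ∈ orbit G (x j)) :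
    Bijective fun p : Σ j, G ⧸ stabilizer G (x j) => ofQuotientStabilizer G (x p.1) p.2 := by
  constructor
  · rintro ⟨i, a⟩ ⟨j, b⟩ hab
    obtain rfl : i = j := by
      induction a using QuotientGroup.induction_on with | H g =>
      induction b using QuotientGroup.induction_on with | H g' =>
      refine hinj i j ⟨g⁻¹ * g', ?_⟩
      simp_all [mul_smul, inv_smul_eq_iff]
    exact congrArg (Sigma.mk i) (injective_ofQuotientStabilizer G (x i) hab)
  · intro y
    obtain ⟨j, g, rfl⟩ := hsurj y
    exact ⟨⟨j, g⟩, ofQuotientStabilizer_mk G (x j) g⟩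

end MulAction

namespace DoubleCoset

variable {G : Type*} [Group G] (H K : Subgroup G)

theorem coe_prod_mem_orbit_iff (a b a' b' : G) :
    ((a : G ⧸ H), (b : G ⧸ K)) ∈ orbit G ((a' : G ⧸ H), (b' : G ⧸ K)) ↔
      mk K H (b⁻¹ * a) = mk K H (b'⁻¹ * a') := by
  simp only [mem_orbit_iff, Prod.smul_mk, Prod.mk.injEq, MulAction.Quotient.smul_mk,
    smul_eq_mul, QuotientGroup.eq, eq]
  constructor
  · rintro ⟨g, hH, hK⟩
    exact ⟨_, hK, _, H.inv_mem hH, by group⟩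
  · rintro ⟨k, hk, h, hh, hkh⟩
    refine ⟨b * k⁻¹ * b'⁻¹, ?_, ?_⟩
    · have : (b * k⁻¹ * b'⁻¹ * a')⁻¹ * a = h⁻¹ := by rw [mul_assoc _ b'⁻¹, hkh]; group
      rw [this]
      exact H.inv_mem hh
    · simpa [mul_assoc] using hk

theorem stabilizer_coe_one_prod_coe_inv (g : G) :
    stabilizer G (((1 : G) : G ⧸ H), ((g⁻¹ : G) : G ⧸ K)) =
      H ⊓ K.comap (MulAut.conj g).toMonoidHom := by
  ext x
  simp only [mem_stabilizer_iff, Prod.smul_mk, Prod.mk.injEq, MulAction.Quotient.smul_mk,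
    smul_eq_mul, QuotientGroup.eq, Subgroup.mem_inf, Subgroup.mem_comap]
  refine and_congr (by simp) ?_
  rw [← K.inv_mem_iff]
  simp [MulAut.conj_apply, mul_assoc]

end DoubleCoset

/-- Let `G` be a group and `H`, `K` subgroups. Choose for every
double coset `j ∈ K\G/H` a representative `r j ∈ G` (i.e. `K·(r j)·H = j`), and set
`L j = H ⊓ (r j)⁻¹ K (r j)`. Then the assignment sending, in the component indexed
by `j`, the coset `x·(L j) ∈ G/L j` to the pair `(x·H, x·(r j)⁻¹·K) ∈ G/H × G/K`
yields a well-defined map (this is the content of the existential quantifier), which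
is bijective and `G`-equivariant for the left translation actions (diagonal action
on the product). -/
theorem stmt9 {G : Type*} [Group G] (H K : Subgroup G)
    (r : DoubleCoset.Quotient (K : Set G) (H : Set G) → G)
    (hr : ∀ j, DoubleCoset.mk K H (r j) = j)
    (L : DoubleCoset.Quotient (K : Set G) (H : Set G) → Subgroup G)
    (hL : ∀ j, L j = H ⊓ K.comap (MulAut.conj (r j)).toMonoidHom) :
    ∃ F : (Σ j : DoubleCoset.Quotient (K : Set G) (H : Set G), G ⧸ L j) → (G ⧸ H) × (G ⧸ K),
      (∀ (j : DoubleCoset.Quotient (K : Set G) (H : Set G)) (x : G),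
          F ⟨j, (x : G ⧸ L j)⟩ = ((x : G ⧸ H), ((x * (r j)⁻¹ : G) : G ⧸ K))) ∧
      Function.Bijective F ∧
      (∀ (g : G) (j : DoubleCoset.Quotient (K : Set G) (H : Set G)) (y : G ⧸ L j),
          F ⟨j, g • y⟩ = g • F ⟨j, y⟩) := by
  let x j : (G ⧸ H) × (G ⧸ K) := (((1 : G) : G ⧸ H), (((r j)⁻¹ : G) : G ⧸ K))
  obtain rfl : L = fun j => stabilizer G (x j) :=
    funext fun j => (hL j).trans (DoubleCoset.stabilizer_coe_one_prod_coe_inv H K (r j)).symm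
  refine ⟨fun p => ofQuotientStabilizer G (x p.1) p.2, fun j g => ?_,
    bijective_sigma_ofQuotientStabilizer x (fun i j hij => ?_) (fun y => ?_),
    fun g j y => ofQuotientStabilizer_smul G (x j) g y⟩
  · simp [x, ofQuotientStabilizer_mk]
  · rw [← hr i, ← hr j]
    simpa [x, DoubleCoset.coe_prod_mem_orbit_iff] using hij
  · obtain ⟨a, b⟩ := y
    induction a using QuotientGroup.induction_on with | H a =>
    induction b using QuotientGroup.induction_on with | H b =>
    exact ⟨DoubleCoset.mk K H (b⁻¹ * a),
      (DoubleCoset.coe_prod_mem_orbit_iff H K _ _ _ _).2 (by simp [hr])⟩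
end
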